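/- arXiv:2408.04937 — 5 statements merged into one kernel-verified Lean document; each statement's English description precedes it below -/
import Mathlib

section
/- Let q < p < 0 be real numbers, and let S be the set of points z in the upper half-plane ℍ (with its standard hyperbolic metric) lying on the Euclidean circle centered at (p+q)/2 of radius (p-q)/2, i.e. S = { z ∈ ℍ : |z - (p+q)/2| = (p-q)/2 }. Then the point √(pq)·i ∈ ℍ minimizes, among all points on the positive imaginary axis, the hyperbolic distance to S: for every real y > 0, the infimum of hyperbolic distances from √(pq)·i to points of S is at most the infimum of hyperbolic distances from y·i to points of S. -/
/-!
Write `c = (p + q) / 2` and `r = (p - q) / 2`. For every point `y i` of the imaginary axis and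
every `w` on the circle `|w - c| = r`, a Cauchy–Schwarz estimate in the explicit formula for
`cosh (dist (y i) w)` gives `r * cosh (dist (y i) w) ≥ |c|`. Since `pq = c² - r²`, the circle
`|z| = √(pq)` is orthogonal to `|w - c| = r`, and at their intersection point `w₀` equality holds
for `y = √(pq)`. Hence `dist (√(pq) i) w₀ ≤ dist (y i) w` for all `y > 0` and `w ∈ S`.
-/

open UpperHalfPlane

lemma Complex.norm_sub_ofReal_eq_iff {w : ℂ} {c r : ℝ} (hr : 0 ≤ r) :
    ‖w - c‖ = r ↔ (w.re - c) ^ 2 + w.im ^ 2 = r ^ 2 := by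
  rw [← sq_eq_sq₀ (norm_nonneg _) hr, Complex.sq_norm, Complex.normSq_apply]
  simp only [Complex.sub_re, Complex.sub_im, Complex.ofReal_re, Complex.ofReal_im, sub_zero]
  ring_nf

namespace UpperHalfPlane

lemma abs_le_mul_cosh_dist_of_re_eq_zero {z w : ℍ} {c r : ℝ} (hz : z.re = 0)
    (hw : ‖(w : ℂ) - c‖ = r) : |c| ≤ r * Real.cosh (dist z w) := by
  have hr : 0 ≤ r := hw ▸ norm_nonneg _
  have hcirc : (w.re - c) ^ 2 + w.im ^ 2 = r ^ 2 := (Complex.norm_sub_ofReal_eq_iff hr).1 hw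
  have hy := z.im_pos
  have hv := w.im_pos
  rw [cosh_dist', hz, mul_div_assoc', le_div_iff₀ (by positivity)]
  set s := √(r ^ 2 + z.im ^ 2)
  have hs : s ^ 2 = r ^ 2 + z.im ^ 2 := Real.sq_sqrt (by positivity)
  -- Cauchy–Schwarz: `(c (w.re - c), |c| w.im)` has length `|c| r` and `(r, z.im)` has length `s`
  have hcs : |c| * z.im * w.im - c * r * (w.re - c) ≤ |c| * r * s := by
    have : (c * r * (w.re - c) - |c| * z.im * w.im) ^ 2 ≤ (|c| * r * s) ^ 2 := by
      have lagrange : (|c| * r * s) ^ 2 - (c * r * (w.re - c) - |c| * z.im * w.im) ^ 2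
          = (r * |c| * w.im + z.im * c * (w.re - c)) ^ 2 := by
        linear_combination (|c| ^ 2 * r ^ 2) * hs - (r ^ 2 + z.im ^ 2) * c ^ 2 * hcirc
          + (r ^ 2 + z.im ^ 2) * (r ^ 2 - w.im ^ 2) * sq_abs c
      nlinarith [sq_nonneg (r * |c| * w.im + z.im * c * (w.re - c))]
    nlinarith [mul_nonneg (mul_nonneg (abs_nonneg c) hr) (Real.sqrt_nonneg (r ^ 2 + z.im ^ 2))]
  nlinarith [mul_nonneg hr (sq_nonneg (s - |c|)), sq_abs c]

lemma exists_norm_sub_eq_and_mul_cosh_dist_eq {z : ℍ} {c r : ℝ} (hz : z.re = 0) (hr : 0 < r)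
    (hzc : z.im ^ 2 + r ^ 2 = c ^ 2) :
    ∃ w : ℍ, ‖(w : ℂ) - c‖ = r ∧ r * Real.cosh (dist z w) = |c| := by
  have hy := z.im_pos
  have hc0 : c ≠ 0 := by rintro rfl; nlinarith
  have hc : 0 < |c| := abs_pos.2 hc0
  refine ⟨UpperHalfPlane.mk ⟨z.im ^ 2 / c, r * z.im / |c|⟩ (by dsimp only; positivity), ?_, ?_⟩
  · rw [Complex.norm_sub_ofReal_eq_iff hr.le]
    dsimp only
    field_simp
    rw [sq_abs]
    linear_combination c ^ 2 * (z.im ^ 2 - c ^ 2) * hzc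
  · rw [cosh_dist', hz]
    simp only [mk_re, mk_im, zero_sub, even_two, Even.neg_pow]
    field_simp
    rw [sq_abs]
    linear_combination c ^ 2 * hzc

end UpperHalfPlane

/-- For `q < p < 0`, letting `S ⊆ ℍ` be the hyperbolic geodesic with endpoints `q` and `p`
(the set of points of `ℍ` on the Euclidean circle centered at `(p+q)/2` of radius `(p-q)/2`),
the point `√(pq)·i` minimizes, among points `y·i` (`y > 0`) of the positive imaginary axis,
the infimum of hyperbolic distances to `S`. -/
theorem stmt4 (p q : ℝ) (hq : q < p) (hp : p < 0)
    (S : Set UpperHalfPlane)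
    (hS : S = {z : UpperHalfPlane |
      ‖(z : ℂ) - ((((p + q) / 2 : ℝ)) : ℂ)‖ = (p - q) / 2}) :
    ∀ y : ℝ, 0 < y → ∀ z₀ zy : UpperHalfPlane,
      (z₀ : ℂ) = (Real.sqrt (p * q) : ℝ) * Complex.I →
      (zy : ℂ) = (y : ℝ) * Complex.I →
      sInf (dist z₀ '' S) ≤ sInf (dist zy '' S) := by
  intro y _ z₀ zy hz₀ hzy
  have hr : 0 < (p - q) / 2 := by linarith
  have hz₀re : z₀.re = 0 := by simp [← coe_re, hz₀]
  have hzyre : zy.re = 0 := by simp [← coe_re, hzy]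
  have hz₀im : z₀.im ^ 2 + ((p - q) / 2) ^ 2 = ((p + q) / 2) ^ 2 := by
    rw [← coe_im, hz₀]
    simp only [Complex.mul_im, Complex.ofReal_re, Complex.ofReal_im, Complex.I_re,
      Complex.I_im, mul_one, zero_mul, add_zero]
    rw [Real.sq_sqrt (mul_nonneg_of_nonpos_of_nonpos hp.le (by linarith))]
    ring
  obtain ⟨w₀, hw₀, hcosh₀⟩ := exists_norm_sub_eq_and_mul_cosh_dist_eq hz₀re hr hz₀im
  have hw₀S : w₀ ∈ S := hS ▸ hw₀
  have closest : ∀ w ∈ S, dist z₀ w₀ ≤ dist zy w := by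
    intro w hw
    rw [hS] at hw
    have hcosh := abs_le_mul_cosh_dist_of_re_eq_zero hzyre hw
    rw [← hcosh₀] at hcosh
    simpa only [abs_of_nonneg dist_nonneg] using
      Real.cosh_le_cosh.1 (le_of_mul_le_mul_left hcosh hr)
  have hbdd : BddBelow (dist z₀ '' S) := ⟨0, by rintro _ ⟨w, -, rfl⟩; exact dist_nonneg⟩
  exact (csInf_le hbdd ⟨w₀, hw₀S, rfl⟩).trans
    (le_csInf ⟨_, w₀, hw₀S, rfl⟩ (by rintro _ ⟨w, hw, rfl⟩; exact closest w hw))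
end

section
/- Let l₀, l₁, l₂ > 0 be real numbers, set λₖ := exp(lₖ/2) for k = 0, 1, 2, and set f := (cosh(l₁/2) + cosh((l₂ + l₀)/2)) / (2·sinh(l₂/2)·sinh(l₀/2)). Then f > 1, the matrix A := (√(f-1), -√f; √f, -√(f-1)) belongs to SL(2,ℝ), and the trace of D(λ₀) · A · D(λ₂) · A⁻¹ equals -λ₁ - λ₁⁻¹. -/
/-! With `s = √(f - 1)` and `t = √f` one has `det A = t² - s² = 1`, so `A⁻¹` is the adjugate
of `A`, and a direct computation gives
`tr (D(eᵃ) A D(eᵇ) A⁻¹) = 2 (t² cosh (b - a) - s² cosh (b + a))`.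
For `a = l₀/2`, `b = l₂/2` the definition of `f` reads
`2 f sinh a sinh b = cosh (l₁/2) + cosh (a + b)`, and by the product-to-sum formula
`2 sinh a sinh b = cosh (a + b) - cosh (a - b)` the trace collapses to
`-2 cosh (l₁/2) = -λ₁ - λ₁⁻¹`. The same formula shows that the numerator of `f` exceeds its
denominator by `cosh (l₁/2) + cosh (a - b) > 0`, whence `f > 1`. -/

open Matrix

noncomputable def D (h : ℝ) : Matrix (Fin 2) (Fin 2) ℝ := !![h, 0; 0, h⁻¹]

open Real

lemma Real.two_mul_sinh_mul_sinh (x y : ℝ) :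
    2 * sinh x * sinh y = cosh (x + y) - cosh (x - y) := by
  rw [cosh_add, cosh_sub]
  ring

lemma Real.two_mul_sinh_mul_sinh_pos {x y : ℝ} (hx : 0 < x) (hy : 0 < y) :
    0 < 2 * sinh x * sinh y :=
  mul_pos (mul_pos two_pos (sinh_pos_iff.2 hx)) (sinh_pos_iff.2 hy)

lemma Real.one_lt_add_cosh_add_div_two_mul_sinh_mul_sinh {x y c : ℝ} (hx : 0 < x) (hy : 0 < y)
    (hc : -1 < c) : 1 < (c + cosh (x + y)) / (2 * sinh x * sinh y) := by
  rw [one_lt_div (two_mul_sinh_mul_sinh_pos hx hy), two_mul_sinh_mul_sinh]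
  linarith [one_le_cosh (x - y)]

section CommRing

variable {R : Type*} [CommRing R]

lemma Matrix.det_fin_two_of_neg (s t : R) : (!![s, -t; t, -s]).det = t ^ 2 - s ^ 2 := by
  rw [det_fin_two_of]
  ring

lemma Matrix.inv_fin_two_of_neg {s t : R} (h : t ^ 2 - s ^ 2 = 1) :
    (!![s, -t; t, -s])⁻¹ = !![-s, t; -t, s] := by
  rw [inv_def, det_fin_two_of_neg, h, Ring.inverse_one, one_smul, adjugate_fin_two_of, neg_neg]

end CommRing

lemma trace_D_exp_mul_mul_D_exp_mul (x y s t : ℝ) :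
    (D (exp x) * !![s, -t; t, -s] * D (exp y) * !![-s, t; -t, s]).trace
      = 2 * (t ^ 2 * cosh (y - x) - s ^ 2 * cosh (y + x)) := by
  simp only [D, cosh_eq, mul_fin_two, trace_fin_two_of, exp_add, exp_sub, exp_neg]
  field_simp
  ring

theorem stmt12_general (l₀ l₁ l₂ : ℝ) (h₀ : 0 < l₀) (h₂ : 0 < l₂)
    (lam₀ lam₁ lam₂ : ℝ)
    (hlam₀ : lam₀ = Real.exp (l₀ / 2)) (hlam₁ : lam₁ = Real.exp (l₁ / 2))
    (hlam₂ : lam₂ = Real.exp (l₂ / 2))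
    (f : ℝ)
    (hf : f = (Real.cosh (l₁ / 2) + Real.cosh ((l₂ + l₀) / 2))
        / (2 * Real.sinh (l₂ / 2) * Real.sinh (l₀ / 2)))
    (A : Matrix (Fin 2) (Fin 2) ℝ)
    (hA : A = !![Real.sqrt (f - 1), -Real.sqrt f;
                 Real.sqrt f, -Real.sqrt (f - 1)]) :
    1 < f ∧ A.det = 1 ∧
    (D lam₀ * A * D lam₂ * A⁻¹).trace = -lam₁ - lam₁⁻¹ := by
  rw [add_div l₂] at hf
  have hf₁ : 1 < f := hf ▸ one_lt_add_cosh_add_div_two_mul_sinh_mul_sinh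
    (half_pos h₂) (half_pos h₀) (by linarith [one_le_cosh (l₁ / 2)])
  have hs : √(f - 1) ^ 2 = f - 1 := sq_sqrt (by linarith)
  have ht : √f ^ 2 = f := sq_sqrt (by linarith)
  have hdet : √f ^ 2 - √(f - 1) ^ 2 = 1 := by rw [hs, ht]; ring
  have hf_mul : f * (cosh (l₂ / 2 + l₀ / 2) - cosh (l₂ / 2 - l₀ / 2))
      = cosh (l₁ / 2) + cosh (l₂ / 2 + l₀ / 2) := by
    rw [← two_mul_sinh_mul_sinh, hf,
      div_mul_cancel₀ _ (two_mul_sinh_mul_sinh_pos (half_pos h₂) (half_pos h₀)).ne']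
  refine ⟨hf₁, hA ▸ (det_fin_two_of_neg _ _).trans hdet, ?_⟩
  rw [hA, inv_fin_two_of_neg hdet, hlam₀, hlam₂, trace_D_exp_mul_mul_D_exp_mul, hs, ht,
    hlam₁, ← exp_neg]
  linear_combination (-2) * hf_mul - 2 * cosh_eq (l₁ / 2)

/-- For `l₀, l₁, l₂ > 0`, `λₖ = exp(lₖ/2)` and
`f = (cosh(l₁/2) + cosh((l₂+l₀)/2))/(2·sinh(l₂/2)·sinh(l₀/2))`, one has `f > 1`,
the matrix `A = (√(f-1), -√f; √f, -√(f-1))` lies in SL(2,ℝ), and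
`trace(D(λ₀)·A·D(λ₂)·A⁻¹) = -λ₁ - λ₁⁻¹`. -/
theorem stmt12 (l₀ l₁ l₂ : ℝ) (h₀ : 0 < l₀) (h₁ : 0 < l₁) (h₂ : 0 < l₂)
    (lam₀ lam₁ lam₂ : ℝ)
    (hlam₀ : lam₀ = Real.exp (l₀ / 2)) (hlam₁ : lam₁ = Real.exp (l₁ / 2))
    (hlam₂ : lam₂ = Real.exp (l₂ / 2))
    (f : ℝ)
    (hf : f = (Real.cosh (l₁ / 2) + Real.cosh ((l₂ + l₀) / 2))
        / (2 * Real.sinh (l₂ / 2) * Real.sinh (l₀ / 2)))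
    (A : Matrix (Fin 2) (Fin 2) ℝ)
    (hA : A = !![Real.sqrt (f - 1), -Real.sqrt f;
                 Real.sqrt f, -Real.sqrt (f - 1)]) :
    1 < f ∧ A.det = 1 ∧
    (D lam₀ * A * D lam₂ * A⁻¹).trace = -lam₁ - lam₁⁻¹ :=
  stmt12_general l₀ l₁ l₂ h₀ h₂ lam₀ lam₁ lam₂ hlam₀ hlam₁ hlam₂ f hf A hA
end

section
/- Let λ > 1 be a real number, let ε₁, ε₂ ∈ {1, -1}, and let A, B ∈ SL(2,ℝ) satisfy B · D(√λ) = ε₁ · D(1/√λ) · A and A · D(√λ) = ε₂ · D(1/√λ) · B. Then ε₁ = ε₂, and there exists a nonzero real number T such that A = (0, -T⁻¹; T, 0) and B = ε₁ · A. -/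
/-!
Moving the diagonal factors across, the two relations read `B = ε₁ • D(λ^(-1/2)) A D(λ^(-1/2))`
and hence `A = ε₁ε₂ • D(λ⁻¹) A D(λ⁻¹)`. The right-hand side multiplies the entries of `A` by
`ε₁ε₂λ⁻²`, `ε₁ε₂`, `ε₁ε₂`, `ε₁ε₂λ²`; as `λ² ≠ 1` and `det A ≠ 0`, this forces `ε₁ε₂ = 1` and a
vanishing diagonal. Then `det A = 1` gives the anti-diagonal shape, and conjugation by diagonal
matrices fixes anti-diagonal ones, so `B = ε₁ • A`.
-/

open Matrix

theorem D_mul_D (a b : ℝ) : D a * D b = D (a * b) := by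
  simp [D, mul_comm]

theorem D_one : D 1 = 1 := by
  simp [D, one_fin_two]

theorem D_mul_mul_D {t : ℝ} (ht : t ≠ 0) (M : Matrix (Fin 2) (Fin 2) ℝ) :
    D t * M * D t = !![t ^ 2 * M 0 0, M 0 1; M 1 0, (t ^ 2)⁻¹ * M 1 1] := by
  rw [D, eta_fin_two M, mul_fin_two, mul_fin_two]
  ext i j
  fin_cases i <;> fin_cases j <;> simp <;> field_simp

theorem D_mul_mul_D_of_diag_eq_zero {t : ℝ} (ht : t ≠ 0) {M : Matrix (Fin 2) (Fin 2) ℝ}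
    (h₀₀ : M 0 0 = 0) (h₁₁ : M 1 1 = 0) : D t * M * D t = M := by
  rw [D_mul_mul_D ht]
  ext i j
  fin_cases i <;> fin_cases j <;> simp [h₀₀, h₁₁]

theorem eq_smul_D_mul_mul_D_of_mul_D_eq {s ε : ℝ} (hs : s ≠ 0)
    {A B : Matrix (Fin 2) (Fin 2) ℝ} (h : B * D s = ε • (D (1 / s) * A)) :
    B = ε • (D s⁻¹ * A * D s⁻¹) := calc
  B = B * D s * D s⁻¹ := by rw [mul_assoc, D_mul_D, mul_inv_cancel₀ hs, D_one, mul_one]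
  _ = ε • (D s⁻¹ * A * D s⁻¹) := by rw [h, one_div, smul_mul_assoc]

theorem diag_eq_zero_of_eq_smul_D_mul_mul_D {t c : ℝ} (ht : t ≠ 0) (ht₁ : t ^ 2 ≠ 1)
    {A : Matrix (Fin 2) (Fin 2) ℝ} (hA : A.det ≠ 0) (h : A = c • (D t * A * D t)) :
    c = 1 ∧ A 0 0 = 0 ∧ A 1 1 = 0 := by
  rw [D_mul_mul_D ht] at h
  have e₀₀ : A 0 0 = c * (t ^ 2 * A 0 0) := by simpa using congrFun (congrFun h 0) 0
  have e₀₁ : A 0 1 = c * A 0 1 := by simpa using congrFun (congrFun h 0) 1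
  have e₁₁ : A 1 1 = c * ((t ^ 2)⁻¹ * A 1 1) := by simpa using congrFun (congrFun h 1) 1
  have e₁₁' : t ^ 2 * A 1 1 = c * A 1 1 := by
    conv_lhs => rw [e₁₁]
    field_simp
  rw [det_fin_two] at hA
  by_cases hc : c = 1
  · subst hc
    have ht₁' : t ^ 2 - 1 ≠ 0 := sub_ne_zero.mpr ht₁
    exact ⟨rfl, eq_zero_of_ne_zero_of_mul_left_eq_zero ht₁' (by linear_combination -e₀₀),
      eq_zero_of_ne_zero_of_mul_left_eq_zero ht₁' (by linear_combination e₁₁')⟩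
  · have h₀₁ : A 0 1 = 0 :=
      eq_zero_of_ne_zero_of_mul_left_eq_zero (sub_ne_zero.mpr (Ne.symm hc) : 1 - c ≠ 0)
        (by linear_combination e₀₁)
    rw [h₀₁, zero_mul, sub_zero] at hA
    have hct : c * t ^ 2 = 1 :=
      mul_right_cancel₀ (left_ne_zero_of_mul hA) (by linear_combination -e₀₀)
    have htc : t ^ 2 = c := mul_right_cancel₀ (right_ne_zero_of_mul hA) e₁₁'
    have ht₄ : (t ^ 2 - 1) * (t ^ 2 + 1) = 0 := by linear_combination (t ^ 2) * htc + hct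
    exact absurd ((mul_eq_zero.mp ht₄).resolve_right (by positivity)) (sub_ne_zero.mpr ht₁)

theorem exists_eq_antidiag_of_det_eq_one {K : Type*} [Field K] {A : Matrix (Fin 2) (Fin 2) K}
    (h₀₀ : A 0 0 = 0) (h₁₁ : A 1 1 = 0) (hA : A.det = 1) :
    ∃ T : K, T ≠ 0 ∧ A = !![0, -T⁻¹; T, 0] := by
  rw [det_fin_two, h₀₀, h₁₁] at hA
  have h₀₁ : A 0 1 = -(A 1 0)⁻¹ :=
    neg_eq_iff_eq_neg.mp (eq_inv_of_mul_eq_one_left (by linear_combination hA))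
  refine ⟨A 1 0, fun h ↦ by simp [h] at hA, ?_⟩
  ext i j
  fin_cases i <;> fin_cases j <;> simp [h₀₀, h₁₁, h₀₁]

theorem stmt13_general (l : ℝ) (hl : 1 < l) (ε₁ ε₂ : ℝ)
    (hε₁ : ε₁ = 1 ∨ ε₁ = -1)
    (A B : Matrix (Fin 2) (Fin 2) ℝ) (hA : A.det = 1)
    (h₁ : B * D (Real.sqrt l) = ε₁ • (D (1 / Real.sqrt l) * A))
    (h₂ : A * D (Real.sqrt l) = ε₂ • (D (1 / Real.sqrt l) * B)) :
    ε₁ = ε₂ ∧ ∃ T : ℝ, T ≠ 0 ∧ A = !![0, -T⁻¹; T, 0] ∧ B = ε₁ • A := by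
  have hs : √l ≠ 0 := by positivity
  have hB := eq_smul_D_mul_mul_D_of_mul_D_eq hs h₁
  have hsl : (√l)⁻¹ * (√l)⁻¹ = l⁻¹ := by rw [← mul_inv, Real.mul_self_sqrt (by positivity)]
  have hAA : A = (ε₂ * ε₁) • (D l⁻¹ * A * D l⁻¹) := by
    conv_lhs => rw [eq_smul_D_mul_mul_D_of_mul_D_eq hs h₂, hB]
    rw [mul_smul_comm, smul_mul_assoc, smul_smul, ← hsl, ← D_mul_D]
    simp only [mul_assoc]
  have hl₀ : l⁻¹ ≠ 0 := by positivity
  have hl₁ : l⁻¹ ^ 2 ≠ 1 :=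
    (pow_lt_one₀ (by positivity) (inv_lt_one_of_one_lt₀ hl) two_ne_zero).ne
  obtain ⟨hε, h₀₀, h₁₁⟩ := diag_eq_zero_of_eq_smul_D_mul_mul_D hl₀ hl₁ (by simp [hA]) hAA
  refine ⟨by rcases hε₁ with rfl | rfl <;> linarith, ?_⟩
  obtain ⟨T, hT, hAT⟩ := exists_eq_antidiag_of_det_eq_one h₀₀ h₁₁ hA
  refine ⟨T, hT, hAT, ?_⟩
  rwa [D_mul_mul_D_of_diag_eq_zero (inv_ne_zero hs) h₀₀ h₁₁] at hB

/-- If `λ > 1`, `ε₁, ε₂ ∈ {1,-1}`, and `A, B ∈ SL(2,ℝ)` satisfy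
`B·D(√λ) = ε₁·D(1/√λ)·A` and `A·D(√λ) = ε₂·D(1/√λ)·B`, then `ε₁ = ε₂` and
`A = (0, -T⁻¹; T, 0)` for some `T ≠ 0`, with `B = ε₁·A`. -/
theorem stmt13 (l : ℝ) (hl : 1 < l) (ε₁ ε₂ : ℝ)
    (hε₁ : ε₁ = 1 ∨ ε₁ = -1) (hε₂ : ε₂ = 1 ∨ ε₂ = -1)
    (A B : Matrix (Fin 2) (Fin 2) ℝ) (hA : A.det = 1) (hB : B.det = 1)
    (h₁ : B * D (Real.sqrt l) = ε₁ • (D (1 / Real.sqrt l) * A))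
    (h₂ : A * D (Real.sqrt l) = ε₂ • (D (1 / Real.sqrt l) * B)) :
    ε₁ = ε₂ ∧ ∃ T : ℝ, T ≠ 0 ∧ A = !![0, -T⁻¹; T, 0] ∧ B = ε₁ • A :=
  stmt13_general l hl ε₁ ε₂ hε₁ A B hA h₁ h₂
end

section
/- Let μ₀, μ₁, μ₂ > 1 be real numbers, and for each k = 0, 1, 2 let aₖ, bₖ be real numbers with -bₖ > aₖ > 0 and bₖ² - aₖ² = 1, and set Ãₖ := (aₖ, bₖ; -bₖ, -aₖ) ∈ SL(2,ℝ). If the product D(μ₂⁻¹)·Ã₂·D(μ₁⁻¹)·Ã₁·D(μ₀⁻¹)·Ã₀ equals I or -I, then it equals I. -/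
/-!
If the product were `-I`, cancelling the leading factor `D(μ₂⁻¹)·Ã₂` (using `Ã₂² = -I`) would give
`D(μ₁⁻¹)·Ã₁·D(μ₀⁻¹)·Ã₀ = Ã₂·D(μ₂)`. The right side has `(1,1)`-entry `a₂μ₂ > 0`, while the left side
has `(1,1)`-entry `μ₁⁻¹(μ₀⁻¹a₁a₀ - μ₀b₁b₀)`, which is negative because `0 < a₁a₀ < b₁b₀` and `μ₀⁻¹ < μ₀`.
-/

open Matrix

theorem D_mul_D_inv {h : ℝ} (hh : h ≠ 0) : D h * D h⁻¹ = 1 := by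
  simp [D, one_fin_two, hh]

theorem cocycle_mul_self {a b : ℝ} (hd : b ^ 2 - a ^ 2 = 1) :
    !![a, b; -b, -a] * !![a, b; -b, -a] = (-1 : Matrix (Fin 2) (Fin 2) ℝ) := by
  ext i j
  fin_cases i <;> fin_cases j <;> simp <;> linarith

theorem eq_mul_of_mul_mul_eq_neg_one {R : Type*} [Ring R] {u v A X : R} (hvu : v * u = 1)
    (hA : A * A = -1) (h : u * A * X = -1) : X = A * v :=
  calc X = -(A * A) * X := by rw [hA, neg_neg, one_mul]
    _ = -(A * (v * u) * A * X) := by rw [hvu, mul_one, neg_mul]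
    _ = -(A * v * (u * A * X)) := by noncomm_ring
    _ = A * v := by rw [h, mul_neg_one, neg_neg]

theorem D_inv_mul_cocycle_mul_D_inv_mul_cocycle_zero_zero_neg {μ ν a b c d : ℝ}
    (hμ : 0 < μ) (hν : 1 < ν) (ha : 0 < a) (hab : a < -b) (hc : 0 < c) (hcd : c < -d) :
    (D μ⁻¹ * !![a, b; -b, -a] * D ν⁻¹ * !![c, d; -d, -c]) 0 0 < 0 := by
  have entry : (D μ⁻¹ * !![a, b; -b, -a] * D ν⁻¹ * !![c, d; -d, -c]) 0 0
      = μ⁻¹ * (ν⁻¹ * (a * c) - ν * (b * d)) := by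
    simp [D]
    ring
  have hac : a * c < b * d := by nlinarith
  have hν_inv : ν⁻¹ < ν := (inv_lt_one_of_one_lt₀ hν).trans hν
  have hlt : ν⁻¹ * (a * c) < ν * (b * d) :=
    calc ν⁻¹ * (a * c) < ν⁻¹ * (b * d) := by gcongr
      _ < ν * (b * d) := by gcongr; exact (mul_pos ha hc).trans hac
  rw [entry]
  exact mul_neg_of_pos_of_neg (inv_pos.2 hμ) (sub_neg.2 hlt)

theorem cocycle_mul_D_zero_zero (a b μ : ℝ) : (!![a, b; -b, -a] * D μ) 0 0 = a * μ := by
  simp [D]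

theorem stmt16_general (μ₀ μ₁ μ₂ : ℝ) (hμ₀ : 1 < μ₀) (hμ₁ : 1 < μ₁) (hμ₂ : 1 < μ₂)
    (a₀ b₀ a₁ b₁ a₂ b₂ : ℝ)
    (h₀ : a₀ < -b₀) (h₀' : 0 < a₀)
    (h₁ : a₁ < -b₁) (h₁' : 0 < a₁)
    (h₂' : 0 < a₂) (hd₂ : b₂ ^ 2 - a₂ ^ 2 = 1)
    (A₀ A₁ A₂ : Matrix (Fin 2) (Fin 2) ℝ)
    (hA₀ : A₀ = !![a₀, b₀; -b₀, -a₀]) (hA₁ : A₁ = !![a₁, b₁; -b₁, -a₁])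
    (hA₂ : A₂ = !![a₂, b₂; -b₂, -a₂])
    (h : D μ₂⁻¹ * A₂ * D μ₁⁻¹ * A₁ * D μ₀⁻¹ * A₀ = 1 ∨
         D μ₂⁻¹ * A₂ * D μ₁⁻¹ * A₁ * D μ₀⁻¹ * A₀ = -1) :
    D μ₂⁻¹ * A₂ * D μ₁⁻¹ * A₁ * D μ₀⁻¹ * A₀ = 1 := by
  refine h.resolve_right fun hneg => ?_
  have hcancel : D μ₁⁻¹ * A₁ * D μ₀⁻¹ * A₀ = A₂ * D μ₂ := by
    refine eq_mul_of_mul_mul_eq_neg_one (D_mul_D_inv (by positivity))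
      (hA₂ ▸ cocycle_mul_self hd₂) ?_
    simpa only [mul_assoc] using hneg
  have hlt := D_inv_mul_cocycle_mul_D_inv_mul_cocycle_zero_zero_neg (μ := μ₁) (by positivity)
    hμ₀ h₁' h₁ h₀' h₀
  rw [← hA₀, ← hA₁, hcancel, hA₂, cocycle_mul_D_zero_zero] at hlt
  exact (mul_pos h₂' (by positivity)).not_gt hlt

/-- For `μ₀, μ₁, μ₂ > 1` and `Ãₖ = (aₖ, bₖ; -bₖ, -aₖ)` with `-bₖ > aₖ > 0` and
`bₖ² - aₖ² = 1`: if `D(μ₂⁻¹)·Ã₂·D(μ₁⁻¹)·Ã₁·D(μ₀⁻¹)·Ã₀ = ±I`, then it equals `I`. -/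
theorem stmt16 (μ₀ μ₁ μ₂ : ℝ) (hμ₀ : 1 < μ₀) (hμ₁ : 1 < μ₁) (hμ₂ : 1 < μ₂)
    (a₀ b₀ a₁ b₁ a₂ b₂ : ℝ)
    (h₀ : a₀ < -b₀) (h₀' : 0 < a₀) (hd₀ : b₀ ^ 2 - a₀ ^ 2 = 1)
    (h₁ : a₁ < -b₁) (h₁' : 0 < a₁) (hd₁ : b₁ ^ 2 - a₁ ^ 2 = 1)
    (h₂ : a₂ < -b₂) (h₂' : 0 < a₂) (hd₂ : b₂ ^ 2 - a₂ ^ 2 = 1)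
    (A₀ A₁ A₂ : Matrix (Fin 2) (Fin 2) ℝ)
    (hA₀ : A₀ = !![a₀, b₀; -b₀, -a₀]) (hA₁ : A₁ = !![a₁, b₁; -b₁, -a₁])
    (hA₂ : A₂ = !![a₂, b₂; -b₂, -a₂])
    (h : D μ₂⁻¹ * A₂ * D μ₁⁻¹ * A₁ * D μ₀⁻¹ * A₀ = 1 ∨
         D μ₂⁻¹ * A₂ * D μ₁⁻¹ * A₁ * D μ₀⁻¹ * A₀ = -1) :
    D μ₂⁻¹ * A₂ * D μ₁⁻¹ * A₁ * D μ₀⁻¹ * A₀ = 1 :=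
  stmt16_general μ₀ μ₁ μ₂ hμ₀ hμ₁ hμ₂ a₀ b₀ a₁ b₁ a₂ b₂ h₀ h₀' h₁ h₁' h₂' hd₂ A₀ A₁ A₂ hA₀ hA₁ hA₂ h
end

section
/- Let μ₀, μ₁, μ₂ > 1 be real numbers, and for each k = 0, 1, 2 let aₖ, bₖ be real numbers with -bₖ > aₖ > 0 and bₖ² - aₖ² = 1, and set Ãₖ := (aₖ, bₖ; -bₖ, -aₖ) ∈ SL(2,ℝ). If the product D(μ₂)·Ã₂·D(μ₁)·Ã₁·D(μ₀)·Ã₀ equals I or -I, then it equals -I. -/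
/-!
If the product were `I`, then `N = D μ₁ Ã₁ D μ₀ Ã₀` would be the inverse of `D μ₂ Ã₂`, a positive
multiple of its adjugate, so `N₀₁ > 0 > N₁₀`. Left multiplication by `D μ₁` rescales these entries
by positive factors, so `X = Ã₁ D μ₀ Ã₀` would satisfy `X₀₁ > 0 > X₁₀`. But
`X₀₁ - X₁₀ = (a₁b₀ + a₀b₁)(μ₀ - μ₀⁻¹)` is negative since `μ₀ > 1`.
-/

open Matrix

theorem det_smul_eq_adjugate_of_mul_eq_one {n R : Type*} [DecidableEq n] [Fintype n]
    [CommRing R] {P N : Matrix n n R} (h : P * N = 1) : P.det • N = P.adjugate :=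
  calc P.det • N = P.adjugate * P * N := by rw [adjugate_mul, smul_one_mul]
    _ = P.adjugate := by rw [Matrix.mul_assoc, h, Matrix.mul_one]

theorem D_mul_apply_zero_one (h : ℝ) (X : Matrix (Fin 2) (Fin 2) ℝ) :
    (D h * X) 0 1 = h * X 0 1 := by
  simp [D, mul_apply, Fin.sum_univ_two]

theorem D_mul_apply_one_zero (h : ℝ) (X : Matrix (Fin 2) (Fin 2) ℝ) :
    (D h * X) 1 0 = h⁻¹ * X 1 0 := by
  simp [D, mul_apply, Fin.sum_univ_two]

abbrev cocycleMatrix (a b : ℝ) : Matrix (Fin 2) (Fin 2) ℝ := !![a, b; -b, -a]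

theorem offDiag_sign_of_D_mul_cocycleMatrix_mul_eq_one {μ a b : ℝ}
    {N : Matrix (Fin 2) (Fin 2) ℝ} (hμ : 0 < μ) (ha : 0 < a) (hab : a < -b)
    (h : D μ * cocycleMatrix a b * N = 1) : 0 < N 0 1 ∧ N 1 0 < 0 := by
  set P := D μ * cocycleMatrix a b
  have hdet : 0 < P.det := by
    simp only [P, det_mul, D, det_fin_two_of]
    field_simp
    nlinarith
  have hN := congrFun₂ (det_smul_eq_adjugate_of_mul_eq_one h)
  have h01 : P.det * N 0 1 = μ * -b := by
    simpa [adjugate_fin_two, P, D_mul_apply_zero_one] using hN 0 1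
  have h10 : P.det * N 1 0 = μ⁻¹ * b := by
    simpa [adjugate_fin_two, P, D_mul_apply_one_zero] using hN 1 0
  have hb : 0 < -b := ha.trans hab
  refine ⟨pos_of_mul_pos_right ?_ hdet.le, neg_of_mul_neg_right ?_ hdet.le⟩
  · rw [h01]; positivity
  · rw [h10]; exact mul_neg_of_pos_of_neg (inv_pos.2 hμ) (by linarith)

theorem cocycleMatrix_mul_D_mul_cocycleMatrix_apply_zero_one_lt {μ a₀ b₀ a₁ b₁ : ℝ}
    (hμ : 1 < μ) (ha₀ : 0 < a₀) (hb₀ : b₀ < 0) (ha₁ : 0 < a₁) (hb₁ : b₁ < 0) :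
    (cocycleMatrix a₁ b₁ * D μ * cocycleMatrix a₀ b₀) 0 1
      < (cocycleMatrix a₁ b₁ * D μ * cocycleMatrix a₀ b₀) 1 0 := by
  have hdiff : (cocycleMatrix a₁ b₁ * D μ * cocycleMatrix a₀ b₀) 0 1
      - (cocycleMatrix a₁ b₁ * D μ * cocycleMatrix a₀ b₀) 1 0
      = (a₁ * b₀ + a₀ * b₁) * (μ - μ⁻¹) := by
    simp only [D, mul_fin_two, of_apply, cons_val_zero, cons_val_one, cons_val_fin_one]
    ring
  have hcoeff : a₁ * b₀ + a₀ * b₁ < 0 :=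
    add_neg (mul_neg_of_pos_of_neg ha₁ hb₀) (mul_neg_of_pos_of_neg ha₀ hb₁)
  have hμ' : 0 < μ - μ⁻¹ := sub_pos.2 ((inv_lt_one_of_one_lt₀ hμ).trans hμ)
  exact sub_neg.1 (hdiff ▸ mul_neg_of_neg_of_pos hcoeff hμ')

theorem stmt17_general (μ₀ μ₁ μ₂ : ℝ) (hμ₀ : 1 < μ₀) (hμ₁ : 1 < μ₁) (hμ₂ : 1 < μ₂)
    (a₀ b₀ a₁ b₁ a₂ b₂ : ℝ)
    (h₀ : a₀ < -b₀) (h₀' : 0 < a₀)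
    (h₁ : a₁ < -b₁) (h₁' : 0 < a₁)
    (h₂ : a₂ < -b₂) (h₂' : 0 < a₂)
    (A₀ A₁ A₂ : Matrix (Fin 2) (Fin 2) ℝ)
    (hA₀ : A₀ = !![a₀, b₀; -b₀, -a₀]) (hA₁ : A₁ = !![a₁, b₁; -b₁, -a₁])
    (hA₂ : A₂ = !![a₂, b₂; -b₂, -a₂])
    (h : D μ₂ * A₂ * D μ₁ * A₁ * D μ₀ * A₀ = 1 ∨
         D μ₂ * A₂ * D μ₁ * A₁ * D μ₀ * A₀ = -1) :
    D μ₂ * A₂ * D μ₁ * A₁ * D μ₀ * A₀ = -1 := by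
  refine h.resolve_left fun hI => ?_
  subst hA₀ hA₁ hA₂
  set X := cocycleMatrix a₁ b₁ * D μ₀ * cocycleMatrix a₀ b₀
  have hN : D μ₂ * cocycleMatrix a₂ b₂ * (D μ₁ * X) = 1 := by
    simpa only [X, Matrix.mul_assoc] using hI
  obtain ⟨hN01, hN10⟩ :=
    offDiag_sign_of_D_mul_cocycleMatrix_mul_eq_one (by linarith) h₂' h₂ hN
  rw [D_mul_apply_zero_one] at hN01
  rw [D_mul_apply_one_zero] at hN10
  have hX01 : 0 < X 0 1 := pos_of_mul_pos_right hN01 (by linarith)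
  have hX10 : X 1 0 < 0 := neg_of_mul_neg_right hN10 (by positivity)
  have hX : X 0 1 < X 1 0 := cocycleMatrix_mul_D_mul_cocycleMatrix_apply_zero_one_lt hμ₀ h₀'
    (by linarith) h₁' (by linarith)
  linarith

/-- For `μ₀, μ₁, μ₂ > 1` and `Ãₖ = (aₖ, bₖ; -bₖ, -aₖ)` with `-bₖ > aₖ > 0` and
`bₖ² - aₖ² = 1`: if `D(μ₂)·Ã₂·D(μ₁)·Ã₁·D(μ₀)·Ã₀ = ±I`, then it equals `-I`. -/
theorem stmt17 (μ₀ μ₁ μ₂ : ℝ) (hμ₀ : 1 < μ₀) (hμ₁ : 1 < μ₁) (hμ₂ : 1 < μ₂)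
    (a₀ b₀ a₁ b₁ a₂ b₂ : ℝ)
    (h₀ : a₀ < -b₀) (h₀' : 0 < a₀) (hd₀ : b₀ ^ 2 - a₀ ^ 2 = 1)
    (h₁ : a₁ < -b₁) (h₁' : 0 < a₁) (hd₁ : b₁ ^ 2 - a₁ ^ 2 = 1)
    (h₂ : a₂ < -b₂) (h₂' : 0 < a₂) (hd₂ : b₂ ^ 2 - a₂ ^ 2 = 1)
    (A₀ A₁ A₂ : Matrix (Fin 2) (Fin 2) ℝ)
    (hA₀ : A₀ = !![a₀, b₀; -b₀, -a₀]) (hA₁ : A₁ = !![a₁, b₁; -b₁, -a₁])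
    (hA₂ : A₂ = !![a₂, b₂; -b₂, -a₂])
    (h : D μ₂ * A₂ * D μ₁ * A₁ * D μ₀ * A₀ = 1 ∨
         D μ₂ * A₂ * D μ₁ * A₁ * D μ₀ * A₀ = -1) :
    D μ₂ * A₂ * D μ₁ * A₁ * D μ₀ * A₀ = -1 :=
  stmt17_general μ₀ μ₁ μ₂ hμ₀ hμ₁ hμ₂ a₀ b₀ a₁ b₁ a₂ b₂ h₀ h₀' h₁ h₁' h₂ h₂' A₀ A₁ A₂ hA₀ hA₁ hA₂ h
end
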